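/- For every binary downset D of B(n), we have w(D)·2^n ≥ |D|·C(n, ⌊n/2⌋); that is, w(D)/|D| ≥ C(n, ⌊n/2⌋)/2^n, so among binary downsets the ratio of width to size is minimized by the whole Boolean lattice B(n). -/

import Mathlib

open scoped Classical

/-- The width of a finite family of finite sets: the maximum size of an
antichain (under inclusion) contained in the family. -/
noncomputable def width (F : Finset (Finset ℕ)) : ℕ :=
  (F.powerset.filter (fun A => ∀ x ∈ A, ∀ y ∈ A, x ≠ y → ¬ x ⊆ y)).sup Finset.card

/-- Binary order: `A <_b B` iff the largest element of `A Δ B` lies in `B`. -/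
def binLT (A B : Finset ℕ) : Prop :=
  ∃ k, k ∈ B ∧ k ∉ A ∧ ∀ j, k < j → (j ∈ A ↔ j ∈ B)

/-!
Split a binary downset `D ⊆ B(n + 1)` at the top element `n + 1`: either `D ⊆ B(n)`, or `D`
contains all of `B(n)` together with the sets `X ∪ {n + 1}`, `X ∈ D'`, for a binary downset
`D' ⊆ B(n)`. Induction on `n` then gives, for every `t ≤ n / 2`, an antichain `A ⊆ D` of sets of
size at most `t` with `|D| C(n, t) ≤ |A| 2ⁿ`. In the second case `A` consists of all `t`-subsets
of `[n]` and the lift of the antichain found for `D'` and `t - 1`; a `t`-subset of `[n]` inside a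
lifted set `X ∪ {n + 1}` would lie in `X`, which has fewer than `t` elements.
-/

open Finset

section SetFamily

variable {α : Type*} [DecidableEq α]

lemma card_union_image_insert {L A : Finset (Finset α)} {a : α} (haL : ∀ X ∈ L, a ∉ X)
    (haA : ∀ X ∈ A, a ∉ X) : #(L ∪ A.image (insert a)) = #L + #A := by
  have hdisj : Disjoint L (A.image (insert a)) := by
    refine disjoint_left.2 fun X hXL hX => ?_
    obtain ⟨Y, -, rfl⟩ := mem_image.1 hX
    exact haL _ hXL (mem_insert_self a Y)
  rw [card_union_of_disjoint hdisj, card_image_of_injOn]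
  intro X hX Y hY hXY
  rw [← erase_insert (haA X hX), ← erase_insert (haA Y hY)]
  exact congrArg (erase · a) hXY

lemma isAntichain_union_image_insert {L A : Finset (Finset α)} {a : α} {s : ℕ}
    (hL : (L : Set (Finset α)).Sized (s + 1)) (haL : ∀ X ∈ L, a ∉ X)
    (hA : IsAntichain (· ⊆ ·) (A : Set (Finset α))) (hAs : ∀ X ∈ A, #X ≤ s)
    (haA : ∀ X ∈ A, a ∉ X) :
    IsAntichain (· ⊆ ·) ((L ∪ A.image (insert a) : Finset (Finset α)) : Set (Finset α)) := by
  rw [coe_union, coe_image, isAntichain_union]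
  refine ⟨hL.isAntichain, ?_, ?_⟩
  · rintro _ ⟨X, hX, rfl⟩ _ ⟨Y, hY, rfl⟩ hXY hsub
    exact hA hX hY (fun h => hXY (h ▸ rfl)) ((insert_subset_insert_iff (haA X hX)).1 hsub)
  · rintro X hX _ ⟨Y, hY, rfl⟩ -
    refine ⟨fun hsub => ?_, fun hsub => haL X hX (hsub (mem_insert_self a Y))⟩
    have hXY := card_le_card ((subset_insert_iff_of_notMem (haL X hX)).1 hsub)
    have := hL hX
    have := hAs Y hY
    omega

end SetFamily

lemma card_le_width {F A : Finset (Finset ℕ)} (hAF : A ⊆ F)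
    (hA : IsAntichain (· ⊆ ·) (A : Set (Finset ℕ))) : #A ≤ width F :=
  le_sup (f := card) (mem_filter.2 ⟨mem_powerset.2 hAF, fun _ hx _ hy => hA hx hy⟩)

lemma binLT_of_mem_of_forall_lt {A B : Finset ℕ} {m : ℕ} (hm : m ∈ A) (hA : ∀ j ∈ A, j ≤ m)
    (hB : ∀ j ∈ B, j < m) : binLT B A :=
  ⟨m, hm, fun h => (hB m h).false, fun j hj =>
    iff_of_false (fun h => by have := hB j h; omega) (fun h => by have := hA j h; omega)⟩

lemma binLT.insert {A B : Finset ℕ} {a : ℕ} (h : binLT B A) (ha : a ∉ A) :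
    binLT (insert a B) (insert a A) := by
  obtain ⟨k, hkA, hkB, hk⟩ := h
  have hka : k ≠ a := fun h => ha (h ▸ hkA)
  refine ⟨k, mem_insert_of_mem hkA, by simp [hka, hkB], fun j hj => ?_⟩
  simp only [mem_insert, hk j hj]

lemma subset_Icc_of_notMem {A : Finset ℕ} {n : ℕ} (hA : A ⊆ Icc 1 (n + 1)) (hn : n + 1 ∉ A) :
    A ⊆ Icc 1 n := fun x hx => by
  have := mem_Icc.1 (hA hx)
  have : x ≠ n + 1 := fun h => hn (h ▸ hx)
  exact mem_Icc.2 (by omega)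

lemma choose_le_choose_succ_of_two_mul_lt {n s : ℕ} (h : 2 * s < n) :
    n.choose s ≤ n.choose (s + 1) := by
  rcases Nat.lt_or_ge s (n / 2) with hs | hs
  · exact Nat.choose_le_succ_of_lt_half_left hs
  · obtain rfl : n = 2 * s + 1 := by omega
    exact (Nat.choose_symm_half s).ge

lemma succ_choose_le_two_mul_choose_min {n t : ℕ} (h : 2 * t ≤ n + 1) :
    (n + 1).choose t ≤ 2 * n.choose (min t (n / 2)) := by
  rcases t with _ | s
  · simp
  rw [Nat.choose_succ_succ']
  by_cases hs : 2 * (s + 1) ≤ n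
  · rw [min_eq_left (by omega)]
    have := choose_le_choose_succ_of_two_mul_lt (show 2 * s < n by omega)
    omega
  · obtain rfl : n = 2 * s + 1 := by omega
    rw [min_eq_right (by omega), show (2 * s + 1) / 2 = s by omega, Nat.choose_symm_half]
    omega

lemma add_mul_succ_choose_succ_le {n s d a : ℕ} (hs : 2 * s < n) (hd : d ≤ 2 ^ n)
    (hda : d * n.choose s ≤ a * 2 ^ n) :
    (2 ^ n + d) * (n + 1).choose (s + 1) ≤ (n.choose (s + 1) + a) * 2 ^ (n + 1) := by
  have := mul_add_mul_le_mul_add_mul (choose_le_choose_succ_of_two_mul_lt hs) hd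
  rw [Nat.choose_succ_succ', pow_succ]
  nlinarith

def IsBinaryDownset (n : ℕ) (D : Finset (Finset ℕ)) : Prop :=
  (∀ A ∈ D, A ⊆ Icc 1 n) ∧ ∀ A ∈ D, ∀ B ⊆ Icc 1 n, binLT B A → B ∈ D

namespace IsBinaryDownset

variable {n : ℕ} {D : Finset (Finset ℕ)}

lemma card_le (hD : IsBinaryDownset n D) : #D ≤ 2 ^ n := by
  simpa using card_le_card (fun A hA => mem_powerset.2 (hD.1 A hA) : D ⊆ (Icc 1 n).powerset)

lemma empty_mem (hD : IsBinaryDownset n D) (hne : D.Nonempty) : ∅ ∈ D := by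
  obtain ⟨A, hA⟩ := hne
  obtain rfl | hAne := A.eq_empty_or_nonempty
  · exact hA
  · exact hD.2 A hA ∅ (empty_subset _)
      (binLT_of_mem_of_forall_lt (A.max'_mem hAne) (A.le_max' · ·) (by simp))

lemma of_memberSubfamily_eq_empty (hD : IsBinaryDownset (n + 1) D)
    (h : D.memberSubfamily (n + 1) = ∅) : IsBinaryDownset n D := by
  refine ⟨fun A hA => subset_Icc_of_notMem (hD.1 A hA) fun hn => ?_, fun A hA B hB =>
    hD.2 A hA B (hB.trans (Icc_subset_Icc_right n.le_succ))⟩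
  have : A.erase (n + 1) ∈ D.memberSubfamily (n + 1) := by simp [insert_erase hn, hA]
  simp [h] at this

lemma memberSubfamily (hD : IsBinaryDownset (n + 1) D) :
    IsBinaryDownset n (D.memberSubfamily (n + 1)) := by
  refine ⟨fun A hA => ?_, fun A hA B hB hBA => ?_⟩
  · rw [mem_memberSubfamily] at hA
    exact subset_Icc_of_notMem ((subset_insert _ _).trans (hD.1 _ hA.1)) hA.2
  · rw [mem_memberSubfamily] at hA ⊢
    have hBn : n + 1 ∉ B := fun h => by simpa using hB h
    refine ⟨hD.2 _ hA.1 _ ?_ (hBA.insert hA.2), hBn⟩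
    exact insert_subset (by simp) (hB.trans (Icc_subset_Icc_right n.le_succ))

/-- A member containing `n + 1` is binary-above every subset of `[n]`. -/
lemma nonMemberSubfamily_eq_powerset (hD : IsBinaryDownset (n + 1) D)
    (h : (D.memberSubfamily (n + 1)).Nonempty) :
    D.nonMemberSubfamily (n + 1) = (Icc 1 n).powerset := by
  obtain ⟨X, hX⟩ := h
  rw [mem_memberSubfamily] at hX
  ext B
  rw [mem_nonMemberSubfamily, mem_powerset]
  refine ⟨fun hB => subset_Icc_of_notMem (hD.1 B hB.1) hB.2, fun hB => ?_⟩
  have hlt : binLT B (insert (n + 1) X) :=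
    binLT_of_mem_of_forall_lt (mem_insert_self _ X) (fun j hj => (mem_Icc.1 (hD.1 _ hX.1 hj)).2)
      (fun j hj => Nat.lt_succ_of_le (mem_Icc.1 (hB hj)).2)
  exact ⟨hD.2 _ hX.1 B (hB.trans (Icc_subset_Icc_right n.le_succ)) hlt,
    fun h => by simpa using hB h⟩

lemma card_eq (hD : IsBinaryDownset (n + 1) D) (h : (D.memberSubfamily (n + 1)).Nonempty) :
    #D = 2 ^ n + #(D.memberSubfamily (n + 1)) := by
  rw [← card_memberSubfamily_add_card_nonMemberSubfamily (n + 1) D,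
    hD.nonMemberSubfamily_eq_powerset h, card_powerset, Nat.card_Icc, add_tsub_cancel_right,
    add_comm]

lemma exists_antichain_zero (hD : IsBinaryDownset n D) :
    ∃ A ⊆ D, IsAntichain (· ⊆ ·) (A : Set (Finset ℕ)) ∧ (∀ X ∈ A, #X ≤ 0) ∧
      #D * n.choose 0 ≤ #A * 2 ^ n := by
  obtain rfl | hne := D.eq_empty_or_nonempty
  · exact ⟨∅, empty_subset _, by simp, by simp, by simp⟩
  · exact ⟨{∅}, singleton_subset_iff.2 (hD.empty_mem hne), by simp, by simp,
      by simpa using hD.card_le⟩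

lemma exists_antichain_succ_of_memberSubfamily_nonempty {s : ℕ} (hD : IsBinaryDownset (n + 1) D)
    (h : (D.memberSubfamily (n + 1)).Nonempty) (hs : 2 * s < n) {A : Finset (Finset ℕ)}
    (hAD : A ⊆ D.memberSubfamily (n + 1)) (hA : IsAntichain (· ⊆ ·) (A : Set (Finset ℕ)))
    (hAs : ∀ X ∈ A, #X ≤ s) (hcount : #(D.memberSubfamily (n + 1)) * n.choose s ≤ #A * 2 ^ n) :
    ∃ A ⊆ D, IsAntichain (· ⊆ ·) (A : Set (Finset ℕ)) ∧ (∀ X ∈ A, #X ≤ s + 1) ∧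
      #D * (n + 1).choose (s + 1) ≤ #A * 2 ^ (n + 1) := by
  set L := powersetCard (s + 1) (Icc 1 n)
  have haL : ∀ X ∈ L, n + 1 ∉ X := fun X hX hn => by simpa using (mem_powersetCard.1 hX).1 hn
  have haA : ∀ X ∈ A, n + 1 ∉ X := fun X hX => (mem_memberSubfamily.1 (hAD hX)).2
  refine ⟨L ∪ A.image (insert (n + 1)), union_subset (fun X hX => ?_) (fun X hX => ?_),
    isAntichain_union_image_insert (Set.sized_powersetCard _ _) haL hA hAs haA,
    fun X hX => ?_, ?_⟩
  · have : X ∈ D.nonMemberSubfamily (n + 1) := by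
      rw [hD.nonMemberSubfamily_eq_powerset h]
      exact mem_powerset.2 (mem_powersetCard.1 hX).1
    exact (mem_nonMemberSubfamily.1 this).1
  · obtain ⟨Y, hY, rfl⟩ := mem_image.1 hX
    exact (mem_memberSubfamily.1 (hAD hY)).1
  · rcases mem_union.1 hX with hX | hX
    · exact (mem_powersetCard.1 hX).2.le
    · obtain ⟨Y, hY, rfl⟩ := mem_image.1 hX
      exact (card_insert_le _ _).trans (Nat.succ_le_succ (hAs Y hY))
  · rw [card_union_image_insert haL haA, card_powersetCard, Nat.card_Icc, add_tsub_cancel_right,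
      hD.card_eq h]
    exact add_mul_succ_choose_succ_le hs hD.memberSubfamily.card_le hcount

theorem exists_antichain (hD : IsBinaryDownset n D) {t : ℕ} (ht : 2 * t ≤ n) :
    ∃ A ⊆ D, IsAntichain (· ⊆ ·) (A : Set (Finset ℕ)) ∧ (∀ X ∈ A, #X ≤ t) ∧
      #D * n.choose t ≤ #A * 2 ^ n := by
  induction n generalizing t D with
  | zero =>
    obtain rfl : t = 0 := by omega
    exact hD.exists_antichain_zero
  | succ n ih =>
    obtain h | h := (D.memberSubfamily (n + 1)).eq_empty_or_nonempty
    · obtain ⟨A, hAD, hA, hAs, hcount⟩ :=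
        ih (hD.of_memberSubfamily_eq_empty h) (t := min t (n / 2)) (by omega)
      refine ⟨A, hAD, hA, fun X hX => (hAs X hX).trans (min_le_left _ _), ?_⟩
      calc #D * (n + 1).choose t ≤ #D * (2 * n.choose (min t (n / 2))) :=
            Nat.mul_le_mul_left _ (succ_choose_le_two_mul_choose_min ht)
        _ = 2 * (#D * n.choose (min t (n / 2))) := by ring
        _ ≤ 2 * (#A * 2 ^ n) := Nat.mul_le_mul_left _ hcount
        _ = #A * 2 ^ (n + 1) := by ring
    · rcases t with _ | s
      · exact hD.exists_antichain_zero
      obtain ⟨A, hAD, hA, hAs, hcount⟩ := ih hD.memberSubfamily (t := s) (by omega)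
      exact hD.exists_antichain_succ_of_memberSubfamily_nonempty h (by omega) hAD hA hAs hcount

end IsBinaryDownset

/-- For every binary downset `D` of `B(n)` (an initial segment of the binary order),
`w(D)/|D| ≥ C(n, ⌊n/2⌋)/2^n`. -/
theorem width_ratio_binary_downset (n : ℕ) (D : Finset (Finset ℕ))
    (hD : ∀ A ∈ D, A ⊆ Finset.Icc 1 n)
    (hinit : ∀ A ∈ D, ∀ B ⊆ Finset.Icc 1 n, binLT B A → B ∈ D) :
    D.card * Nat.choose n (n / 2) ≤ width D * 2 ^ n := by
  obtain ⟨A, hAD, hA, -, hcount⟩ :=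
    IsBinaryDownset.exists_antichain ⟨hD, hinit⟩ (Nat.mul_div_le n 2)
  exact hcount.trans (Nat.mul_le_mul_right _ (card_le_width hAD hA))
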